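/- arXiv:2108.11241 — 2 statements merged into one kernel-verified Lean document; each statement's English description precedes it below -/
import Mathlib

section
/- For any commutative ring A the following are equivalent: (1) the graph Γ(A) is connected; (2) for every unimodular row (a,b) ∈ A² there exist a₀, …, aₙ ∈ A such that the class of (a,b) equals ∞·S(aₙ)S(aₙ₋₁)···S(a₀); (3) every unimodular pair (a,b) satisfies a weak Euclidean algorithm, i.e. there exist a₀, …, aₙ ∈ A and r₀, …, rₙ₋₁ ∈ A such that, setting r₋₂ := a, r₋₁ := b and rₙ := 0, one has r_{k−2} = a_k r_{k−1} + r_k for all 0 ≤ k ≤ n; (4) A is a GE₂-ring, i.e. GE₂(A) = GL₂(A). -/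
open Matrix

/-- A row `(a,b) ∈ A²` is unimodular if `∃ r s, r*a + s*b = 1`. -/
def IsUnimod {A : Type*} [CommRing A] (v : Fin 2 → A) : Prop :=
  ∃ r s : A, r * v 0 + s * v 1 = 1

/-- Unimodular rows of length 2. -/
abbrev UnimodRow (A : Type*) [CommRing A] := {v : Fin 2 → A // IsUnimod v}

/-- Two unimodular rows are equivalent if they differ by multiplication by a unit. -/
instance vertexSetoid (A : Type*) [CommRing A] : Setoid (UnimodRow A) where
  r v w := ∃ u : Aˣ, (u : A) • v.1 = w.1
  iseqv := by
    refine ⟨fun v => ⟨1, by simp⟩, ?_, ?_⟩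
    · rintro v w ⟨u, h⟩
      exact ⟨u⁻¹, by rw [← h, smul_smul, Units.inv_mul, one_smul]⟩
    · rintro v w z ⟨u, h⟩ ⟨u', h'⟩
      exact ⟨u' * u, by rw [← h', ← h, smul_smul, ← Units.val_mul]⟩

/-- The vertices of the graph Γ(A): unimodular rows up to multiplication by a unit. -/
def Vertex (A : Type*) [CommRing A] := Quotient (vertexSetoid A)

/-- The graph Γ(A). -/
def GammaGraph (A : Type*) [CommRing A] : SimpleGraph (Vertex A) where
  Adj x y := x ≠ y ∧ ∃ v w : UnimodRow A, x = ⟦v⟧ ∧ y = ⟦w⟧ ∧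
    IsUnit (v.1 0 * w.1 1 - v.1 1 * w.1 0)
  symm := ⟨by
    rintro x y ⟨hne, v, w, hx, hy, hd⟩
    refine ⟨hne.symm, w, v, hy, hx, ?_⟩
    have h : w.1 0 * v.1 1 - w.1 1 * v.1 0 = -(v.1 0 * w.1 1 - v.1 1 * w.1 0) := by ring
    rw [h]
    exact hd.neg⟩
  loopless := ⟨fun x h => h.1 rfl⟩

theorem isUnimod_vecMul {A : Type*} [CommRing A] {v : Fin 2 → A} (h : IsUnimod v)
    (M : GL (Fin 2) A) : IsUnimod (vecMul v (M : Matrix (Fin 2) (Fin 2) A)) := by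
  obtain ⟨r, s, hrs⟩ := h
  set w : Fin 2 → A := ((M⁻¹ : GL (Fin 2) A) : Matrix (Fin 2) (Fin 2) A) *ᵥ ![r, s] with hw
  refine ⟨w 0, w 1, ?_⟩
  have h1 : vecMul v (M : Matrix (Fin 2) (Fin 2) A) ⬝ᵥ w = v ⬝ᵥ ![r, s] := by
    rw [hw, ← dotProduct_mulVec, mulVec_mulVec, Units.mul_inv, one_mulVec]
  simp only [dotProduct, Fin.sum_univ_two] at h1
  simp only [Matrix.cons_val_zero, Matrix.cons_val_one, Matrix.head_cons] at h1
  linear_combination h1 + hrs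

/-- The right action of GL₂(A) on the vertices of Γ(A). -/
def vertexMul {A : Type*} [CommRing A] (x : Vertex A) (M : GL (Fin 2) A) : Vertex A :=
  Quotient.map (fun v => ⟨vecMul v.1 (M : Matrix (Fin 2) (Fin 2) A), isUnimod_vecMul v.2 M⟩)
    (by
      rintro v w ⟨u, h⟩
      refine ⟨u, ?_⟩
      show (u : A) • (vecMul v.1 (M : Matrix (Fin 2) (Fin 2) A)) =
        vecMul w.1 (M : Matrix (Fin 2) (Fin 2) A)
      rw [← h, Matrix.smul_vecMul]) x

/-- The vertex ∞ = [(1,0)]. -/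
def vInf (A : Type*) [CommRing A] : Vertex A := ⟦⟨![1, 0], ⟨1, 0, by norm_num⟩⟩⟧

/-- The vertex 0 = [(0,1)]. -/
def vZero (A : Type*) [CommRing A] : Vertex A := ⟦⟨![0, 1], ⟨0, 1, by norm_num⟩⟩⟧

/-- The vertex 1 = [(1,1)]. -/
def vOne (A : Type*) [CommRing A] : Vertex A := ⟦⟨![1, 1], ⟨1, 0, by norm_num⟩⟩⟧
open Matrix

/-- E(a) = [[a,1],[-1,0]] as an element of GL₂. -/
def Egl {A : Type*} [CommRing A] (a : A) : GL (Fin 2) A :=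
  ⟨!![a, 1; -1, 0], !![0, -1; 1, a],
    by ext i j; fin_cases i <;> fin_cases j <;> simp [Matrix.mul_apply, Fin.sum_univ_two],
    by ext i j; fin_cases i <;> fin_cases j <;> simp [Matrix.mul_apply, Fin.sum_univ_two]⟩

/-- S(a) = [[a,1],[1,0]] as an element of GL₂. -/
def Sgl {A : Type*} [CommRing A] (a : A) : GL (Fin 2) A :=
  ⟨!![a, 1; 1, 0], !![0, 1; 1, -a],
    by ext i j; fin_cases i <;> fin_cases j <;> simp [Matrix.mul_apply, Fin.sum_univ_two],
    by ext i j; fin_cases i <;> fin_cases j <;> simp [Matrix.mul_apply, Fin.sum_univ_two]⟩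

/-- The elementary matrix E₁₂(a) = [[1,a],[0,1]] in GL₂. -/
def E12gl {A : Type*} [CommRing A] (a : A) : GL (Fin 2) A :=
  ⟨!![1, a; 0, 1], !![1, -a; 0, 1],
    by ext i j; fin_cases i <;> fin_cases j <;> simp [Matrix.mul_apply, Fin.sum_univ_two],
    by ext i j; fin_cases i <;> fin_cases j <;> simp [Matrix.mul_apply, Fin.sum_univ_two]⟩

/-- The elementary matrix E₂₁(a) = [[1,0],[a,1]] in GL₂. -/
def E21gl {A : Type*} [CommRing A] (a : A) : GL (Fin 2) A :=
  ⟨!![1, 0; a, 1], !![1, 0; -a, 1],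
    by ext i j; fin_cases i <;> fin_cases j <;> simp [Matrix.mul_apply, Fin.sum_univ_two],
    by ext i j; fin_cases i <;> fin_cases j <;> simp [Matrix.mul_apply, Fin.sum_univ_two]⟩

/-- GE₂(A): the subgroup of GL₂(A) generated by the elementary matrices and the
invertible diagonal matrices. -/
def GE2 (A : Type*) [CommRing A] : Subgroup (GL (Fin 2) A) :=
  Subgroup.closure
    ({M | ∃ a : A, M = E12gl a} ∪ {M | ∃ a : A, M = E21gl a} ∪
      {M | (M : Matrix (Fin 2) (Fin 2) A) 0 1 = 0 ∧ (M : Matrix (Fin 2) (Fin 2) A) 1 0 = 0})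

/-- Given `f : A → G` and a tuple `(a 0, …, a (n-1))`, the product
`f (a (n-1)) * ⋯ * f (a 1) * f (a 0)` (rightmost factor first). -/
def wordProd {A : Type*} {G : Type*} [Monoid G] (f : A → G) :
    {n : ℕ} → (Fin n → A) → G
  | 0, _ => 1
  | n + 1, a => f (a (Fin.last n)) * wordProd f (fun j : Fin n => a j.castSucc)

/-- The pair (a,b) satisfies a weak Euclidean algorithm: there are a₀,…,aₙ and
r₀,…,r_{n-1} such that, with r₋₂ := a, r₋₁ := b and rₙ := 0, one has
r_{k-2} = a_k r_{k-1} + r_k for 0 ≤ k ≤ n.  (Here `r (k+2)` plays the role of `r_k`.) -/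
def WeakEuclidean {A : Type*} [CommRing A] (a b : A) : Prop :=
  ∃ (n : ℕ) (q : Fin (n + 1) → A) (r : ℕ → A),
    r 0 = a ∧ r 1 = b ∧ r (n + 2) = 0 ∧
    ∀ k : Fin (n + 1), r k.1 = q k * r (k.1 + 1) + r (k.1 + 2)

/-!
`GL₂(A)` acts on `Γ(A)` by graph automorphisms (the determinant is multiplicative), transitively
on vertices since a unimodular row is the first row of an invertible matrix; the stabiliser of `∞`
is the lower triangular group, and the neighbours of `∞` are exactly the vertices `∞ · S(a)`.
Transporting along a walk, a vertex is joined to `∞` iff it is `∞ · S(aₙ)⋯S(a₀)`. Because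
`(x, y) · S(a) = (a x + y, x)`, such a word applied to `(u, 0)` runs the weak Euclidean recursion
backwards. Finally, if `∞ · M = ∞ · W` for a word `W` then `M W⁻¹` is lower triangular, hence
in `GE₂(A)`; conversely `E₁₂(a) = S(a) S(0)` while `E₂₁(a)` and the diagonal matrices fix `∞`, so
every element of `GE₂(A)` moves `∞` inside its connected component.
-/

section Vertices

variable {A : Type*} [CommRing A]

lemma vecMul_pair {ι : Type*} (x y : A) (M : Matrix (Fin 2) ι A) :
    ![x, y] ᵥ* M = x • M 0 + y • M 1 := by
  ext i
  simp [vecMul, dotProduct, Fin.sum_univ_two]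

lemma IsUnimod.isUnit_of_eq_smul {v w : Fin 2 → A} {x : A} (hv : IsUnimod v)
    (h : v = x • w) : IsUnit x := by
  obtain ⟨r, s, hrs⟩ := hv
  subst h
  refine IsUnit.of_mul_eq_one (r * w 0 + s * w 1) ?_
  rw [← hrs]
  simp only [Pi.smul_apply, smul_eq_mul]
  ring

lemma isUnit_det_GL (M : GL (Fin 2) A) : IsUnit (M : Matrix (Fin 2) (Fin 2) A).det :=
  (Matrix.isUnit_iff_isUnit_det _).mp M.isUnit

lemma isUnit_diag_of_apply_zero_one {M : GL (Fin 2) A}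
    (h : (M : Matrix (Fin 2) (Fin 2) A) 0 1 = 0) :
    IsUnit ((M : Matrix (Fin 2) (Fin 2) A) 0 0) ∧
      IsUnit ((M : Matrix (Fin 2) (Fin 2) A) 1 1) := by
  simpa [Matrix.det_fin_two, h] using isUnit_det_GL M

lemma vertexMul_mk (v : UnimodRow A) (M : GL (Fin 2) A) :
    vertexMul (⟦v⟧ : Vertex A) M =
      ⟦⟨v.1 ᵥ* (M : Matrix (Fin 2) (Fin 2) A), isUnimod_vecMul v.2 M⟩⟧ :=
  rfl

lemma vertexMul_mul (x : Vertex A) (M N : GL (Fin 2) A) :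
    vertexMul (vertexMul x M) N = vertexMul x (M * N) := by
  induction x using Quotient.ind
  simp only [vertexMul_mk, Units.val_mul, vecMul_vecMul]
  rfl

lemma vertexMul_one (x : Vertex A) : vertexMul x 1 = x := by
  induction x using Quotient.ind
  simp only [vertexMul_mk, Units.val_one, vecMul_one]
  rfl

lemma vertexMul_inv_mul (x : Vertex A) (M : GL (Fin 2) A) :
    vertexMul (vertexMul x M⁻¹) M = x := by
  rw [vertexMul_mul, inv_mul_cancel, vertexMul_one]

lemma vertexMul_mul_inv (x : Vertex A) (M : GL (Fin 2) A) :
    vertexMul (vertexMul x M) M⁻¹ = x := by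
  rw [vertexMul_mul, mul_inv_cancel, vertexMul_one]

lemma vertexMul_left_injective (M : GL (Fin 2) A) :
    Function.Injective fun x : Vertex A => vertexMul x M :=
  Function.LeftInverse.injective (g := (vertexMul · M⁻¹)) fun x => vertexMul_mul_inv x M

lemma mk_eq_vInf_mul_iff {v : UnimodRow A} {M : GL (Fin 2) A} :
    (⟦v⟧ : Vertex A) = vertexMul (vInf A) M ↔
      ∃ u : Aˣ, (u : A) • v.1 = (M : Matrix (Fin 2) (Fin 2) A) 0 := by
  have hrow : ![(1 : A), 0] ᵥ* (M : Matrix (Fin 2) (Fin 2) A) =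
      (M : Matrix (Fin 2) (Fin 2) A) 0 := by
    simp [vecMul_pair]
  rw [vInf, vertexMul_mk, Quotient.eq]
  exact exists_congr fun u => by rw [← hrow]

lemma exists_mk_eq_vInf_mul (v : UnimodRow A) :
    ∃ M : GL (Fin 2) A, (⟦v⟧ : Vertex A) = vertexMul (vInf A) M := by
  obtain ⟨r, s, hrs⟩ := v.2
  refine ⟨.mk'' !![v.1 0, v.1 1; -s, r] ?_, mk_eq_vInf_mul_iff.mpr ⟨1, ?_⟩⟩
  · rw [Matrix.det_fin_two_of]
    convert isUnit_one (M := A) using 1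
    linear_combination hrs
  · ext i; fin_cases i <;> simp

lemma vertexMul_vInf_eq_self_iff {M : GL (Fin 2) A} :
    vertexMul (vInf A) M = vInf A ↔ (M : Matrix (Fin 2) (Fin 2) A) 0 1 = 0 := by
  rw [eq_comm]
  refine (mk_eq_vInf_mul_iff (v := ⟨![1, 0], 1, 0, by simp⟩)).trans ?_
  constructor
  · rintro ⟨u, hu⟩
    simpa using (congrFun hu 1).symm
  · intro h
    obtain ⟨u, hu⟩ := (isUnit_diag_of_apply_zero_one h).1
    refine ⟨u, ?_⟩
    ext i; fin_cases i <;> simp [hu, h]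

end Vertices

section Words

variable {α G : Type*}

lemma wordProd_snoc [Monoid G] (f : α → G) {n : ℕ} (c : Fin n → α) (a : α) :
    wordProd f (Fin.snoc c a : Fin (n + 1) → α) = f a * wordProd f c := by
  simp only [wordProd, Fin.snoc_last, Fin.snoc_castSucc]

lemma wordProd_mem [Monoid G] {S : Type*} [SetLike S G] [SubmonoidClass S G] {H : S}
    {f : α → G} (hf : ∀ a, f a ∈ H) {n : ℕ} (c : Fin n → α) : wordProd f c ∈ H := by
  induction n with
  | zero => exact one_mem H
  | succ n ih => exact mul_mem (hf _) (ih _)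

end Words

section Remainders

variable {A : Type*} [CommRing A]

lemma vecMul_Sgl (x y a : A) :
    ![x, y] ᵥ* (Sgl a : Matrix (Fin 2) (Fin 2) A) = ![a * x + y, x] := by
  ext i; fin_cases i <;> simp [Sgl, mul_comm]

lemma vecMul_wordProd_Sgl {n : ℕ} (c : Fin n → A) (r : ℕ → A)
    (hr : ∀ k : Fin n, r k = c k * r (k + 1) + r (k + 2)) :
    ![r n, r (n + 1)] ᵥ* ((wordProd Sgl c : GL (Fin 2) A) : Matrix (Fin 2) (Fin 2) A) =
      ![r 0, r 1] := by
  induction n with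
  | zero => simp [wordProd]
  | succ n ih =>
    have hlast : r n = c (Fin.last n) * r (n + 1) + r (n + 2) := hr (Fin.last n)
    rw [wordProd, Units.val_mul, ← vecMul_vecMul, vecMul_Sgl, ← hlast]
    exact ih (fun k => c k.castSucc) fun k => hr k.castSucc

lemma exists_remainders {n : ℕ} (c : Fin n → A) (x y : A) :
    ∃ r : ℕ → A, r n = x ∧ r (n + 1) = y ∧
      ∀ k : Fin n, r k = c k * r (k + 1) + r (k + 2) := by
  induction n with
  | zero => exact ⟨fun | 0 => x | _ + 1 => y, rfl, rfl, fun k => k.elim0⟩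
  | succ n ih =>
    obtain ⟨r, hrx, hry, hr⟩ := ih (Fin.tail c)
    refine ⟨fun | 0 => c 0 * r 0 + r 1 | k + 1 => r k, hrx, hry, Fin.cases rfl fun k => hr k⟩

end Remainders

section GE2

variable {A : Type*} [CommRing A]

lemma E12gl_mem_GE2 (a : A) : E12gl a ∈ GE2 A :=
  Subgroup.subset_closure (Or.inl (Or.inl ⟨a, rfl⟩))

lemma E21gl_mem_GE2 (a : A) : E21gl a ∈ GE2 A :=
  Subgroup.subset_closure (Or.inl (Or.inr ⟨a, rfl⟩))

lemma mem_GE2_of_apply_zero_one_of_apply_one_zero {M : GL (Fin 2) A}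
    (h01 : (M : Matrix (Fin 2) (Fin 2) A) 0 1 = 0)
    (h10 : (M : Matrix (Fin 2) (Fin 2) A) 1 0 = 0) :
    M ∈ GE2 A :=
  Subgroup.subset_closure (Or.inr ⟨h01, h10⟩)

lemma mem_GE2_of_apply_zero_one {M : GL (Fin 2) A}
    (h : (M : Matrix (Fin 2) (Fin 2) A) 0 1 = 0) : M ∈ GE2 A := by
  obtain ⟨d, hd⟩ := (isUnit_diag_of_apply_zero_one h).2
  set x := -(((d⁻¹ : Aˣ) : A) * (M : Matrix (Fin 2) (Fin 2) A) 1 0)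
  rw [← (GE2 A).mul_mem_cancel_right (E21gl_mem_GE2 x)]
  apply mem_GE2_of_apply_zero_one_of_apply_one_zero
  · simp [E21gl, Matrix.mul_apply, Fin.sum_univ_two, h]
  · simp [E21gl, Matrix.mul_apply, Fin.sum_univ_two, x, ← hd]

lemma Sgl_mem_GE2 (a : A) : Sgl a ∈ GE2 A := by
  -- `S(a) E₂₁(1 - a) E₁₂(-1) = [[1, 0], [1, -1]]`
  rw [← (GE2 A).mul_mem_cancel_right (E21gl_mem_GE2 (1 - a)),
    ← (GE2 A).mul_mem_cancel_right (E12gl_mem_GE2 (-1))]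
  apply mem_GE2_of_apply_zero_one
  simp [Sgl, E12gl, E21gl, Matrix.mul_apply, Fin.sum_univ_two]

end GE2

section Graph

variable {A : Type*} [CommRing A]

lemma det_vecMul_vecMul (v w : Fin 2 → A) (M : Matrix (Fin 2) (Fin 2) A) :
    (v ᵥ* M) 0 * (w ᵥ* M) 1 - (v ᵥ* M) 1 * (w ᵥ* M) 0 =
      (v 0 * w 1 - v 1 * w 0) * M.det := by
  simp only [vecMul, dotProduct, Fin.sum_univ_two, Matrix.det_fin_two]
  ring

lemma GammaGraph.adj_vertexMul {x y : Vertex A} (M : GL (Fin 2) A)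
    (h : (GammaGraph A).Adj x y) :
    (GammaGraph A).Adj (vertexMul x M) (vertexMul y M) := by
  obtain ⟨hne, v, w, rfl, rfl, hd⟩ := h
  refine ⟨(vertexMul_left_injective M).ne hne, _, _, vertexMul_mk v M, vertexMul_mk w M, ?_⟩
  rw [det_vecMul_vecMul]
  exact hd.mul (isUnit_det_GL M)

def GammaGraph.vertexMulHom (M : GL (Fin 2) A) : GammaGraph A →g GammaGraph A where
  toFun x := vertexMul x M
  map_rel' := GammaGraph.adj_vertexMul M

lemma GammaGraph.reachable_vInf_vertexMul_Sgl (a : A) :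
    (GammaGraph A).Reachable (vInf A) (vertexMul (vInf A) (Sgl a)) := by
  by_cases he : vInf A = vertexMul (vInf A) (Sgl a)
  · rw [← he]
  · refine SimpleGraph.Adj.reachable ⟨he, _, _, rfl, vertexMul_mk _ _, ?_⟩
    simp [Sgl]

lemma GammaGraph.exists_Sgl_of_adj_vInf {y : Vertex A} (h : (GammaGraph A).Adj (vInf A) y) :
    ∃ a : A, y = vertexMul (vInf A) (Sgl a) := by
  obtain ⟨-, v, w, hv, rfl, hd⟩ := h
  obtain ⟨t, ht⟩ := Quotient.eq.mp hv
  have hv0 : v.1 0 = t := by simp [← ht]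
  have hv1 : v.1 1 = 0 := by simp [← ht]
  rw [hv0, hv1, zero_mul, sub_zero] at hd
  obtain ⟨e, he⟩ := isUnit_of_mul_isUnit_right hd
  refine ⟨w.1 0 * ((e⁻¹ : Aˣ) : A), mk_eq_vInf_mul_iff.mpr ⟨e⁻¹, ?_⟩⟩
  ext i; fin_cases i <;> simp [Sgl, ← he, mul_comm]

def vInfReachableSubgroup (A : Type*) [CommRing A] : Subgroup (GL (Fin 2) A) where
  carrier := {M | (GammaGraph A).Reachable (vInf A) (vertexMul (vInf A) M)}
  one_mem' := by
    show (GammaGraph A).Reachable _ _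
    rw [vertexMul_one]
  mul_mem' {M N} hM hN := by
    have := hM.map (GammaGraph.vertexMulHom N)
    simp only [GammaGraph.vertexMulHom, RelHom.coeFn_mk, vertexMul_mul] at this
    exact hN.trans this
  inv_mem' {M} hM := by
    have := hM.map (GammaGraph.vertexMulHom M⁻¹)
    simp only [GammaGraph.vertexMulHom, RelHom.coeFn_mk, vertexMul_mul_inv] at this
    exact this.symm

lemma GE2_le_vInfReachableSubgroup : GE2 A ≤ vInfReachableSubgroup A := by
  have lower : ∀ M : GL (Fin 2) A, (M : Matrix (Fin 2) (Fin 2) A) 0 1 = 0 →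
      M ∈ vInfReachableSubgroup A := fun M h => by
    show (GammaGraph A).Reachable _ _
    rw [vertexMul_vInf_eq_self_iff.mpr h]
  rw [GE2, Subgroup.closure_le]
  rintro M ((⟨a, rfl⟩ | ⟨a, rfl⟩) | ⟨h01, -⟩)
  · have hE : Sgl a * Sgl 0 = E12gl a := by
      ext i j; fin_cases i <;> fin_cases j <;> simp [Sgl, E12gl, Matrix.mul_apply, Fin.sum_univ_two]
    rw [SetLike.mem_coe, ← hE]
    exact mul_mem (GammaGraph.reachable_vInf_vertexMul_Sgl a)
      (GammaGraph.reachable_vInf_vertexMul_Sgl 0)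
  · exact lower _ rfl
  · exact lower M h01

end Graph

section Equivalences

variable {A : Type*} [CommRing A]

lemma exists_eq_vInf_mul_wordProd_Sgl_of_connected (h : (GammaGraph A).Connected) (x : Vertex A) :
    ∃ (n : ℕ) (c : Fin (n + 1) → A), x = vertexMul (vInf A) (wordProd Sgl c) := by
  induction (SimpleGraph.reachable_iff_reflTransGen _ _).mp (h.preconnected (vInf A) x) with
  | refl =>
    have hSS : wordProd Sgl ![(0 : A), 0] = 1 := by
      ext i j
      fin_cases i <;> fin_cases j <;> simp [wordProd, Sgl, Matrix.mul_apply, Fin.sum_univ_two]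
    exact ⟨1, ![0, 0], by rw [hSS, vertexMul_one]⟩
  | tail _ hadj ih =>
    obtain ⟨n, c, rfl⟩ := ih
    obtain ⟨a, ha⟩ := GammaGraph.exists_Sgl_of_adj_vInf <| by
      simpa only [vertexMul_mul_inv] using GammaGraph.adj_vertexMul (wordProd Sgl c)⁻¹ hadj
    refine ⟨n + 1, Fin.snoc c a, ?_⟩
    rw [wordProd_snoc, ← vertexMul_mul, ← ha, vertexMul_inv_mul]

lemma exists_mk_eq_vInf_mul_wordProd_Sgl_iff (v : UnimodRow A) :
    (∃ (n : ℕ) (c : Fin (n + 1) → A),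
        (⟦v⟧ : Vertex A) = vertexMul (vInf A) (wordProd Sgl c)) ↔
      WeakEuclidean (v.1 0) (v.1 1) := by
  constructor
  · rintro ⟨n, c, hc⟩
    obtain ⟨u, hu⟩ := mk_eq_vInf_mul_iff.mp hc
    obtain ⟨r, hrx, hry, hr⟩ := exists_remainders c ((u⁻¹ : Aˣ) : A) 0
    have hrows : ![r 0, r 1] = v.1 := by
      rw [← vecMul_wordProd_Sgl c r hr, hrx, hry, vecMul_pair, ← hu, zero_smul, add_zero,
        smul_smul, Units.inv_mul, one_smul]
    exact ⟨n, c, r, congrFun hrows 0, congrFun hrows 1, hry, hr⟩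
  · rintro ⟨n, c, r, hr0, hr1, hrn, hr⟩
    have hrows :
        v.1 = r (n + 1) • ((wordProd Sgl c : GL (Fin 2) A) : Matrix (Fin 2) (Fin 2) A) 0 := by
      have hv : v.1 = ![v.1 0, v.1 1] := by ext i; fin_cases i <;> rfl
      rw [hv, ← hr0, ← hr1, ← vecMul_wordProd_Sgl c r hr, hrn, vecMul_pair, zero_smul,
        add_zero]
    obtain ⟨u, hu⟩ := v.2.isUnit_of_eq_smul hrows
    refine ⟨n, c, mk_eq_vInf_mul_iff.mpr ⟨u⁻¹, ?_⟩⟩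
    rw [hrows, smul_smul, ← hu, Units.inv_mul, one_smul]

lemma GE2_eq_top_of_forall_eq_vInf_mul_wordProd_Sgl
    (h : ∀ x : Vertex A, ∃ (n : ℕ) (c : Fin (n + 1) → A),
      x = vertexMul (vInf A) (wordProd Sgl c)) :
    GE2 A = ⊤ := by
  refine eq_top_iff.mpr fun M _ => ?_
  obtain ⟨n, c, hc⟩ := h (vertexMul (vInf A) M)
  have hW : wordProd Sgl c ∈ GE2 A := wordProd_mem Sgl_mem_GE2 c
  have hMW : vertexMul (vInf A) (M * (wordProd Sgl c)⁻¹) = vInf A := by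
    rw [← vertexMul_mul, hc, vertexMul_mul_inv]
  rw [← (GE2 A).mul_mem_cancel_right (inv_mem hW)]
  exact mem_GE2_of_apply_zero_one (vertexMul_vInf_eq_self_iff.mp hMW)

lemma connected_of_GE2_eq_top (h : GE2 A = ⊤) : (GammaGraph A).Connected := by
  have hreach : ∀ x : Vertex A, (GammaGraph A).Reachable (vInf A) x := by
    refine Quotient.ind fun v => ?_
    obtain ⟨M, hM⟩ := exists_mk_eq_vInf_mul v
    rw [hM]
    exact GE2_le_vInfReachableSubgroup (h ▸ Subgroup.mem_top M)
  exact (SimpleGraph.connected_iff _).mpr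
    ⟨fun x y => (hreach x).symm.trans (hreach y), ⟨vInf A⟩⟩

end Equivalences

/-- The following are equivalent: (1) Γ(A) is connected; (2) every
unimodular row is of the form ∞·S(aₙ)⋯S(a₀); (3) every unimodular pair satisfies a weak
Euclidean algorithm; (4) A is a GE₂-ring. -/
theorem stmt9 (A : Type*) [CommRing A] :
    List.TFAE
      [(GammaGraph A).Connected,
       ∀ v : UnimodRow A, ∃ (n : ℕ) (c : Fin (n + 1) → A),
         (⟦v⟧ : Vertex A) = vertexMul (vInf A) (wordProd Sgl c),
       ∀ a b : A, IsUnimod ![a, b] → WeakEuclidean a b,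
       GE2 A = ⊤] := by
  tfae_have 1 → 2 := fun h v => exists_eq_vInf_mul_wordProd_Sgl_of_connected h ⟦v⟧
  tfae_have 2 ↔ 3 :=
    ⟨fun h a b hab => (exists_mk_eq_vInf_mul_wordProd_Sgl_iff ⟨![a, b], hab⟩).mp (h _),
      fun h v => (exists_mk_eq_vInf_mul_wordProd_Sgl_iff v).mpr (h _ _ v.2)⟩
  tfae_have 2 → 4 := fun h => GE2_eq_top_of_forall_eq_vInf_mul_wordProd_Sgl (Quotient.ind h)
  tfae_have 4 → 1 := connected_of_GE2_eq_top
  tfae_finish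
end

section
/- Let A be a commutative ring, a₁, …, aₙ ∈ A, and let Z = [[u,0],[c,u⁻¹]] be a lower-triangular matrix in SL₂(A) with (1,1)-entry the unit u. Define b₁ := a₁u² + cu and bᵢ := u^{(−1)^{i−1}·2} aᵢ for 2 ≤ i ≤ n. Then for every 1 ≤ i ≤ n, E(bᵢ)E(bᵢ₋₁)···E(b₁) = D(u)^{(−1)^{i−1}} E(aᵢ)E(aᵢ₋₁)···E(a₁) Z in SL₂(A), and b₁, …, bₙ are the unique elements of A with this property. -/
/-!
The first letter absorbs `Z`: `E(a₁u² + cu) = D(u) E(a₁) Z`. Every later letter lets a power of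
`D(u)` pass through it at the cost of inverting it, `E(w⁻²x) D(w) = D(w⁻¹) E(x)`, so by induction
on `i` the word in the `bᵢ` equals `D(u)^{±1}` times the word in the `aᵢ`, times `Z`. Uniqueness:
consecutive prefix products determine each new letter by right cancellation, and `x ↦ E(x)` is
injective.
-/

/-- E(a) = [[a,1],[-1,0]] as an element of SL₂. -/
def ESL {A : Type*} [CommRing A] (a : A) : Matrix.SpecialLinearGroup (Fin 2) A :=
  ⟨!![a, 1; -1, 0], by simp [Matrix.det_fin_two_of]⟩

/-- D(u) = diag(u, u⁻¹) as an element of SL₂. -/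
def DSL {A : Type*} [CommRing A] (u : Aˣ) : Matrix.SpecialLinearGroup (Fin 2) A :=
  ⟨!![(u : A), 0; 0, ((u⁻¹ : Aˣ) : A)], by simp [Matrix.det_fin_two_of]⟩

open Function

section wordProd

variable {A G : Type*} (f : A → G) {n : ℕ}

theorem wordProd_castLE_succ [Monoid G] (v : Fin n → A) (k : ℕ) (hk : k + 1 < n) :
    wordProd f (fun j : Fin (k + 1 + 1) => v (Fin.castLE hk j)) =
      f (v ⟨k + 1, hk⟩) * wordProd f (fun j : Fin (k + 1) => v (Fin.castLE hk.le j)) :=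
  rfl

theorem eq_of_wordProd_castLE_eq [RightCancelMonoid G] (hf : Injective f) {v w : Fin n → A}
    (h : ∀ i : Fin n, wordProd f (fun j : Fin (i.1 + 1) => v (Fin.castLE i.isLt j)) =
      wordProd f (fun j : Fin (i.1 + 1) => w (Fin.castLE i.isLt j))) :
    v = w := by
  funext ⟨k, hk⟩
  apply hf
  cases k with
  | zero => exact (mul_one _).symm.trans ((h ⟨0, hk⟩).trans (mul_one _))
  | succ k =>
    have hk' := h ⟨k + 1, hk⟩
    rw [wordProd_castLE_succ, wordProd_castLE_succ, h ⟨k, by omega⟩] at hk'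
    exact mul_right_cancel hk'

end wordProd

section SL2

variable {A : Type*} [CommRing A]

theorem ESL_injective : Injective (ESL : A → Matrix.SpecialLinearGroup (Fin 2) A) := by
  intro x y h
  simpa [ESL] using congrArg (fun M : Matrix.SpecialLinearGroup (Fin 2) A => M 0 0) h

theorem DSL_mul (u v : Aˣ) : DSL (u * v) = DSL u * DSL v := by
  ext i j
  rw [Matrix.SpecialLinearGroup.coe_mul]
  fin_cases i <;> fin_cases j <;> simp [DSL, Matrix.mul_apply, mul_comm]

theorem DSL_zpow (u : Aˣ) (m : ℤ) : DSL u ^ m = DSL (u ^ m) :=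
  (map_zpow (⟨⟨DSL, by ext i j; fin_cases i <;> fin_cases j <;> simp [DSL]⟩, DSL_mul⟩ :
    Aˣ →* Matrix.SpecialLinearGroup (Fin 2) A) u m).symm

theorem ESL_inv_sq_mul_mul_DSL (w : Aˣ) (x : A) :
    ESL (((w⁻¹ : Aˣ) : A) ^ 2 * x) * DSL w = DSL w⁻¹ * ESL x := by
  ext i j
  rw [Matrix.SpecialLinearGroup.coe_mul, Matrix.SpecialLinearGroup.coe_mul]
  fin_cases i <;> fin_cases j <;> simp [ESL, DSL, Matrix.mul_apply]
  linear_combination (((w⁻¹ : Aˣ) : A) * x) * w.inv_mul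

theorem ESL_mul_sq_add (u : Aˣ) (c x : A) (Z : Matrix.SpecialLinearGroup (Fin 2) A)
    (hZ : (Z : Matrix (Fin 2) (Fin 2) A) = !![(u : A), 0; c, ((u⁻¹ : Aˣ) : A)]) :
    ESL (x * (u : A) ^ 2 + c * u) = DSL u * ESL x * Z := by
  ext i j
  rw [Matrix.SpecialLinearGroup.coe_mul, Matrix.SpecialLinearGroup.coe_mul]
  fin_cases i <;> fin_cases j <;> simp [ESL, DSL, hZ, Matrix.mul_apply]
  ring

theorem coe_zpow_neg_one_pow_sq (u : Aˣ) (k : ℕ) :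
    ((u ^ (-1 : ℤ) ^ k : Aˣ) : A) ^ 2 = if Even k then (u : A) ^ 2 else ((u⁻¹ : Aˣ) : A) ^ 2 := by
  rcases Nat.even_or_odd k with hk | hk
  · rw [hk.neg_one_pow, zpow_one, if_pos hk]
  · rw [hk.neg_one_pow, _root_.zpow_neg_one, if_neg (Nat.not_even_iff_odd.mpr hk)]

theorem wordProd_ESL_castLE_eq {n : ℕ} (u : Aˣ) (c : A) (Z : Matrix.SpecialLinearGroup (Fin 2) A)
    (hZ : (Z : Matrix (Fin 2) (Fin 2) A) = !![(u : A), 0; c, ((u⁻¹ : Aˣ) : A)])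
    (a b : Fin n → A) (hb₀ : ∀ h : 0 < n, b ⟨0, h⟩ = a ⟨0, h⟩ * (u : A) ^ 2 + c * u)
    (hb : ∀ k (h : k + 1 < n),
      b ⟨k + 1, h⟩ = ((u ^ (-1 : ℤ) ^ (k + 1) : Aˣ) : A) ^ 2 * a ⟨k + 1, h⟩)
    (k : ℕ) (hk : k < n) :
    wordProd ESL (fun j : Fin (k + 1) => b (Fin.castLE hk j)) =
      DSL u ^ ((-1 : ℤ) ^ k) * wordProd ESL (fun j : Fin (k + 1) => a (Fin.castLE hk j)) * Z := by
  induction k with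
  | zero =>
    show ESL (b ⟨0, hk⟩) * 1 = DSL u ^ ((-1 : ℤ) ^ 0) * (ESL (a ⟨0, hk⟩) * 1) * Z
    rw [hb₀, pow_zero, zpow_one, mul_one, mul_one, ESL_mul_sq_add u c _ Z hZ]
  | succ k ih =>
    have hw : u ^ (-1 : ℤ) ^ (k + 1) = (u ^ (-1 : ℤ) ^ k)⁻¹ := by
      rw [pow_succ, mul_neg_one, _root_.zpow_neg]
    rw [wordProd_castLE_succ, wordProd_castLE_succ, ih hk.le, hb, DSL_zpow, DSL_zpow, hw,
      ← mul_assoc, ← mul_assoc, ESL_inv_sq_mul_mul_DSL, mul_assoc (DSL _)]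

end SL2

/-- Let Z = [[u,0],[c,u⁻¹]] ∈ SL₂(A) be lower triangular with (1,1)-entry
the unit u, and let a₁,…,aₙ ∈ A.  With b₁ := a₁u² + cu and bᵢ := u^{(-1)^{i-1}·2}aᵢ for
i ≥ 2, one has E(bᵢ)⋯E(b₁) = D(u)^{(-1)^{i-1}} E(aᵢ)⋯E(a₁) Z for all 1 ≤ i ≤ n, and
b₁,…,bₙ are the unique elements of A with this property.  (Indices here are 0-based:
`i : Fin n` corresponds to the (i+1)-st element.) -/
theorem stmt15 (A : Type*) [CommRing A] (n : ℕ) (a : Fin n → A) (u : Aˣ) (c : A)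
    (Z : Matrix.SpecialLinearGroup (Fin 2) A)
    (hZ : (Z : Matrix (Fin 2) (Fin 2) A) = !![(u : A), 0; c, ((u⁻¹ : Aˣ) : A)])
    (b : Fin n → A)
    (hb : ∀ i : Fin n, b i =
      if i.1 = 0 then a i * (u : A) ^ 2 + c * (u : A)
      else if Even i.1 then (u : A) ^ 2 * a i else ((u⁻¹ : Aˣ) : A) ^ 2 * a i) :
    (∀ i : Fin n,
      wordProd ESL (fun j : Fin (i.1 + 1) => b (Fin.castLE i.isLt j)) =
        (DSL u) ^ ((-1 : ℤ) ^ i.1) *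
          wordProd ESL (fun j : Fin (i.1 + 1) => a (Fin.castLE i.isLt j)) * Z) ∧
    (∀ b' : Fin n → A,
      (∀ i : Fin n,
        wordProd ESL (fun j : Fin (i.1 + 1) => b' (Fin.castLE i.isLt j)) =
          (DSL u) ^ ((-1 : ℤ) ^ i.1) *
            wordProd ESL (fun j : Fin (i.1 + 1) => a (Fin.castLE i.isLt j)) * Z) →
      b' = b) := by
  have hb₀ : ∀ h : 0 < n, b ⟨0, h⟩ = a ⟨0, h⟩ * (u : A) ^ 2 + c * u := fun h => by
    simpa using hb ⟨0, h⟩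
  have hb_succ : ∀ k (h : k + 1 < n),
      b ⟨k + 1, h⟩ = ((u ^ (-1 : ℤ) ^ (k + 1) : Aˣ) : A) ^ 2 * a ⟨k + 1, h⟩ := fun k h => by
    rw [hb, if_neg k.succ_ne_zero, coe_zpow_neg_one_pow_sq, ite_mul]
  have hb_words := fun i : Fin n => wordProd_ESL_castLE_eq u c Z hZ a b hb₀ hb_succ i.1 i.isLt
  exact ⟨hb_words, fun b' hb' =>
    eq_of_wordProd_castLE_eq ESL ESL_injective fun i => (hb' i).trans (hb_words i).symm⟩
end
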